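/- Let 0 < μ < L and suppose x₀, x₁, x*, g₀, g₁ ∈ ℝ^n and f₀, f₁, f* ∈ ℝ satisfy the three F_{μ,L}-interpolation inequalities between (x₀,f₀,g₀), (x₁,f₁,g₁), (x*,f*,0), together with the combined inequality g₁ᵀ(x₀ - (2/(L+μ))g₀ - x₁) ≥ 0. Then f₁ - f* ≤ ((L-μ)/(L+μ))²(f₀ - f*). -/

import Mathlib

/-!
Write `p = x₀ - x*`, `q = x₁ - x*`. Once denominators are cleared, each interpolation inequality
and the step condition is a linear inequality in `f₀, f₁, f*` and the Gram entries of
`p, q, g₀, g₁`. Weighting them by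
`L(L+3μ)(L-μ)(L+μ), 2μL(L+3μ)(L-μ), 2μL(L+3μ)(L+μ), 2L(L+3μ)(L-μ)(L+μ)` and adding
`μ(L-μ)‖L(L+3μ)p - L(L+μ)q - (3L+μ)g₀ - (L+μ)g₁‖² + ‖2μL(L+μ)q - (L-μ)²g₀ - (L+μ)²g₁‖²`
gives exactly `2L(L+3μ)(L-μ)((L-μ)²(f₀-f*) - (L+μ)²(f₁-f*)) ≥ 0`.
-/

open RealInnerProductSpace

/-- The `F_{μ,L}` interpolation inequality between the triples `(xi, fi, gi)` and
`(xj, fj, gj)`. -/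
def InterpIneq {n : ℕ} (μ L : ℝ) (xi xj : EuclideanSpace ℝ (Fin n)) (fi fj : ℝ)
    (gi gj : EuclideanSpace ℝ (Fin n)) : Prop :=
  fi ≥ fj + ⟪gj, xi - xj⟫ + 1 / (2 * (1 - μ / L)) *
    ((1 / L) * ‖gi - gj‖ ^ 2 + μ * ‖xi - xj‖ ^ 2 - (2 * μ / L) * ⟪gj - gi, xj - xi⟫)

theorem interpIneq_iff {n : ℕ} {μ L : ℝ} (hL : L ≠ 0) (hμL : μ < L)
    {xi xj gi gj : EuclideanSpace ℝ (Fin n)} {fi fj : ℝ} :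
    InterpIneq μ L xi xj fi fj gi gj ↔
      ‖gi - gj‖ ^ 2 + μ * L * ‖xi - xj‖ ^ 2 - 2 * μ * ⟪gi - gj, xi - xj⟫ ≤
        2 * (L - μ) * (fi - fj - ⟪gj, xi - xj⟫) := by
  have hLμ : 0 < L - μ := sub_pos.mpr hμL
  have key : 2 * (L - μ) * (fi - (fj + ⟪gj, xi - xj⟫ + 1 / (2 * (1 - μ / L)) *
      ((1 / L) * ‖gi - gj‖ ^ 2 + μ * ‖xi - xj‖ ^ 2 - (2 * μ / L) * ⟪gi - gj, xi - xj⟫))) =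
      2 * (L - μ) * (fi - fj - ⟪gj, xi - xj⟫) -
        (‖gi - gj‖ ^ 2 + μ * L * ‖xi - xj‖ ^ 2 - 2 * μ * ⟪gi - gj, xi - xj⟫) := by
    have := hLμ.ne'
    field_simp
    ring
  rw [InterpIneq, ← neg_sub gi, ← neg_sub xi, inner_neg_neg, ge_iff_le, ← sub_nonneg,
    ← mul_nonneg_iff_of_pos_left (by positivity : (0 : ℝ) < 2 * (L - μ)), key, sub_nonneg]

theorem add_sq_mul_le_sub_sq_mul_of_interp {E : Type*} [NormedAddCommGroup E]
    [InnerProductSpace ℝ E] {μ L : ℝ} (hμ : 0 < μ) (hμL : μ < L) {p q g₀ g₁ : E}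
    {f₀ f₁ fs : ℝ}
    (h01 : ‖g₀ - g₁‖ ^ 2 + μ * L * ‖p - q‖ ^ 2 - 2 * μ * ⟪g₀ - g₁, p - q⟫ ≤
      2 * (L - μ) * (f₀ - f₁ - ⟪g₁, p - q⟫))
    (hs0 : ‖g₀‖ ^ 2 + μ * L * ‖p‖ ^ 2 - 2 * μ * ⟪g₀, p⟫ ≤ 2 * (L - μ) * (fs - f₀ + ⟪g₀, p⟫))
    (hs1 : ‖g₁‖ ^ 2 + μ * L * ‖q‖ ^ 2 - 2 * μ * ⟪g₁, q⟫ ≤ 2 * (L - μ) * (fs - f₁ + ⟪g₁, q⟫))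
    (hstep : 0 ≤ ⟪g₁, p - (2 / (L + μ)) • g₀ - q⟫) :
    (L + μ) ^ 2 * (f₁ - fs) ≤ (L - μ) ^ 2 * (f₀ - fs) := by
  have hL : 0 < L := hμ.trans hμL
  have hLμ : 0 < L - μ := sub_pos.mpr hμL
  have hstep' : 2 * ⟪g₀, g₁⟫ ≤ (L + μ) * ⟪g₁, p - q⟫ := by
    have : (L + μ) * ⟪g₁, p - (2 / (L + μ)) • g₀ - q⟫ =
        (L + μ) * ⟪g₁, p - q⟫ - 2 * ⟪g₀, g₁⟫ := by
      rw [inner_sub_right, inner_sub_right, inner_sub_right, inner_smul_right,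
        real_inner_comm g₀]
      field_simp
      ring
    linarith [mul_nonneg (by positivity : 0 ≤ L + μ) hstep]
  have hsq₁ : 0 ≤
      ‖(L * (L + 3 * μ)) • p - (L * (L + μ)) • q - (3 * L + μ) • g₀ - (L + μ) • g₁‖ ^ 2 := by
    positivity
  have hsq₂ : 0 ≤ ‖(2 * μ * L * (L + μ)) • q - (L - μ) ^ 2 • g₀ - (L + μ) ^ 2 • g₁‖ ^ 2 := by
    positivity
  simp only [← real_inner_self_eq_norm_sq, inner_sub_left, inner_sub_right, inner_smul_left,
    inner_smul_right, real_inner_comm p q, real_inner_comm p g₀, real_inner_comm q g₀,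
    real_inner_comm g₀ g₁, real_inner_comm q g₁, real_inner_comm p g₁, RCLike.conj_to_real]
    at h01 hs0 hs1 hstep' hsq₁ hsq₂
  have hgap : 0 ≤ 2 * L * (L + 3 * μ) * (L - μ) *
      ((L - μ) ^ 2 * (f₀ - fs) - (L + μ) ^ 2 * (f₁ - fs)) := by
    linear_combination L * (L + 3 * μ) * (L - μ) * (L + μ) * h01
      + 2 * μ * L * (L + 3 * μ) * (L - μ) * hs0 + 2 * μ * L * (L + 3 * μ) * (L + μ) * hs1
      + 2 * L * (L + 3 * μ) * (L - μ) * (L + μ) * hstep' + μ * (L - μ) * hsq₁ + hsq₂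
  linarith [nonneg_of_mul_nonneg_right hgap (by positivity)]

theorem stmt9 {n : ℕ} (μ L : ℝ) (hμ : 0 < μ) (hμL : μ < L)
    (x₀ x₁ xstar g₀ g₁ : EuclideanSpace ℝ (Fin n)) (f₀ f₁ fstar : ℝ)
    (h1 : InterpIneq μ L x₀ x₁ f₀ f₁ g₀ g₁)
    (h2 : InterpIneq μ L xstar x₀ fstar f₀ 0 g₀)
    (h3 : InterpIneq μ L xstar x₁ fstar f₁ 0 g₁)
    (h4 : ⟪g₁, x₀ - (2 / (L + μ)) • g₀ - x₁⟫ ≥ 0) :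
    f₁ - fstar ≤ ((L - μ) / (L + μ)) ^ 2 * (f₀ - fstar) := by
  have hL : 0 < L := hμ.trans hμL
  rw [interpIneq_iff hL.ne' hμL] at h1 h2 h3
  rw [← sub_sub_sub_cancel_right x₀ x₁ xstar] at h1
  rw [← neg_sub x₀] at h2
  rw [← neg_sub x₁] at h3
  simp only [zero_sub, norm_neg, inner_neg_left, inner_neg_right, neg_neg, sub_neg_eq_add]
    at h2 h3
  have hcentered : x₀ - (2 / (L + μ)) • g₀ - x₁ =
      x₀ - xstar - (2 / (L + μ)) • g₀ - (x₁ - xstar) := by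
    abel
  rw [hcentered] at h4
  rw [div_pow, div_mul_eq_mul_div, le_div_iff₀ (by positivity), mul_comm]
  exact add_sq_mul_le_sub_sq_mul_of_interp hμ hμL h1 h2 h3 h4
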